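/- Let I ⊂ S = k[x_1,...,x_n] be an Artinian monomial ideal and A = S/I. Then A has the weak Lefschetz property if and only if ℓ = x_1 + x_2 + ··· + x_n is a Lefschetz element for A (i.e., multiplication by ℓ has maximal rank in every degree). -/

import Mathlib

/-! Fix a degree `j` and a linear form `∑ aᵢ xᵢ` for which multiplication `[A]_j → [A]_{j+1}` is
injective (resp. surjective). Composing multiplication by `∑ cᵢ xᵢ` with a left (resp. right)
inverse of the map at `a` gives an endomorphism whose determinant is a polynomial in `c`, nonzero
at `a`; wherever it does not vanish, `∑ cᵢ xᵢ` is again injective (resp. surjective). The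
monomials outside the monomial ideal `I` are linearly independent in the Artinian ring `A`, hence
finitely many, so only finitely many degrees matter, and over an infinite field finitely many
nonzero polynomials have a common non-root `c` with all `cᵢ ≠ 0`. The automorphism `xᵢ ↦ cᵢ xᵢ`
preserves supports, hence the grading and `I`, and sends `x₁ + ⋯ + xₙ` to `∑ cᵢ xᵢ`, so the two
forms have maximal rank together. -/

open MvPolynomial

/-- The degree-`j` graded component of `S/I`: the image in `S/I` of the degree-`j`
homogeneous component of `S = K[x_1,…,x_n]`. -/
noncomputable def gradedPiece (K : Type*) [Field K] {n : ℕ}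
    (I : Ideal (MvPolynomial (Fin n) K)) (j : ℕ) :
    Submodule K (MvPolynomial (Fin n) K ⧸ I) :=
  Submodule.map (Ideal.Quotient.mkₐ K I).toLinearMap
    (MvPolynomial.homogeneousSubmodule (Fin n) K j)

/-- Multiplication by (the class of) `L` on `S/I` has maximal rank in every degree:
each map `[A]_j → [A]_{j+1}` is injective or surjective. -/
def maxRank (K : Type*) [Field K] {n : ℕ} (I : Ideal (MvPolynomial (Fin n) K))
    (L : MvPolynomial (Fin n) K) : Prop :=
  ∀ j : ℕ,
    (∀ x ∈ gradedPiece K I j, Ideal.Quotient.mk I L * x = 0 → x = 0) ∨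
    Submodule.map (LinearMap.mulLeft K (Ideal.Quotient.mk I L)) (gradedPiece K I j)
      = gradedPiece K I (j + 1)

section LinearFamily
variable {K ι V W : Type*} [Field K] [Fintype ι] [AddCommGroup V] [Module K V]
  [AddCommGroup W] [Module K W]

theorem exists_mvPolynomial_eval_eq_det [FiniteDimensional K V]
    (U : (ι → K) →ₗ[K] Module.End K V) :
    ∃ p : MvPolynomial ι K, ∀ c, eval c p = LinearMap.det (U c) := by
  classical
  let b := Module.finBasis K V
  let M i := LinearMap.toMatrix b b (U (Pi.single i (1 : K)))
  refine ⟨Matrix.det (∑ i, (X i : MvPolynomial ι K) • (M i).map C), fun c => ?_⟩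
  have hU : U c = ∑ i, c i • U (Pi.single i 1) := by
    simp_rw [← map_smul, ← map_sum, ← Pi.single_smul', smul_eq_mul, mul_one,
      Finset.univ_sum_single]
  rw [← LinearMap.det_toMatrix b, RingHom.map_det, hU]
  congr 1
  ext r t
  simp [M, Matrix.sum_apply]

theorem exists_injective_of_eval_ne_zero [FiniteDimensional K V] (F : (ι → K) →ₗ[K] V →ₗ[K] W)
    {a : ι → K} (ha : Function.Injective (F a)) :
    ∃ p : MvPolynomial ι K, eval a p ≠ 0 ∧ ∀ c, eval c p ≠ 0 → Function.Injective (F c) := by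
  obtain ⟨π, hπ⟩ := (F a).exists_leftInverse_of_injective (LinearMap.ker_eq_bot.mpr ha)
  obtain ⟨p, hp⟩ := exists_mvPolynomial_eval_eq_det ((LinearMap.llcomp K V W V π).comp F)
  refine ⟨p, ?_, fun c hc => ?_⟩
  · rw [hp]
    change LinearMap.det (π ∘ₗ F a) ≠ 0
    simp [hπ]
  rw [hp, ← isUnit_iff_ne_zero, ← LinearMap.isUnit_iff_isUnit_det, Module.End.isUnit_iff] at hc
  exact Function.Injective.of_comp (f := π) hc.injective

theorem exists_surjective_of_eval_ne_zero [FiniteDimensional K W] (F : (ι → K) →ₗ[K] V →ₗ[K] W)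
    {a : ι → K} (ha : Function.Surjective (F a)) :
    ∃ p : MvPolynomial ι K, eval a p ≠ 0 ∧ ∀ c, eval c p ≠ 0 → Function.Surjective (F c) := by
  obtain ⟨σ, hσ⟩ := (F a).exists_rightInverse_of_surjective (LinearMap.range_eq_top.mpr ha)
  obtain ⟨p, hp⟩ := exists_mvPolynomial_eval_eq_det ((LinearMap.lcomp K W σ).comp F)
  refine ⟨p, ?_, fun c hc => ?_⟩
  · rw [hp]
    change LinearMap.det (F a ∘ₗ σ) ≠ 0
    simp [hσ]
  rw [hp, ← isUnit_iff_ne_zero, ← LinearMap.isUnit_iff_isUnit_det, Module.End.isUnit_iff] at hc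
  exact Function.Surjective.of_comp (g := σ) hc.surjective

theorem exists_injective_or_surjective_of_eval_ne_zero [FiniteDimensional K V]
    [FiniteDimensional K W] (F : (ι → K) →ₗ[K] V →ₗ[K] W) {a : ι → K}
    (ha : Function.Injective (F a) ∨ Function.Surjective (F a)) :
    ∃ p : MvPolynomial ι K, eval a p ≠ 0 ∧
      ∀ c, eval c p ≠ 0 → Function.Injective (F c) ∨ Function.Surjective (F c) := by
  rcases ha with ha | ha
  · obtain ⟨p, hpa, hp⟩ := exists_injective_of_eval_ne_zero F ha
    exact ⟨p, hpa, fun c hc => .inl (hp c hc)⟩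
  · obtain ⟨p, hpa, hp⟩ := exists_surjective_of_eval_ne_zero F ha
    exact ⟨p, hpa, fun c hc => .inr (hp c hc)⟩

end LinearFamily

theorem exists_units_forall_eval_ne_zero {K σ α : Type*} [Field K] [Infinite K] [Fintype σ]
    (s : Finset α) (p : α → MvPolynomial σ K) (hp : ∀ j ∈ s, p j ≠ 0) :
    ∃ c : σ → Kˣ, ∀ j ∈ s, eval (fun i => (c i : K)) (p j) ≠ 0 := by
  have hq : (∏ i, X i) * ∏ j ∈ s, p j ≠ 0 :=
    mul_ne_zero (Finset.prod_ne_zero_iff.mpr fun i _ => X_ne_zero i)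
      (Finset.prod_ne_zero_iff.mpr hp)
  obtain ⟨c, hc⟩ : ∃ c, eval c ((∏ i, X i) * ∏ j ∈ s, p j) ≠ 0 := by
    by_contra! h
    exact hq (MvPolynomial.funext fun c => by simp [h c])
  simp only [map_mul, map_prod, eval_X, mul_ne_zero_iff, Finset.prod_ne_zero_iff] at hc
  exact ⟨fun i => Units.mk0 (c i) (hc.1 i (Finset.mem_univ i)), hc.2⟩

section MonomialIdeal
variable {σ R : Type*} [CommSemiring R]

def IsMonomialIdeal (I : Ideal (MvPolynomial σ R)) : Prop :=
  ∀ p, p ∈ I ↔ ∀ m ∈ p.support, monomial m 1 ∈ I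

theorem isMonomialIdeal_span_monomial [Nontrivial R] (s : Set (σ →₀ ℕ)) :
    IsMonomialIdeal (Ideal.span ((fun b => monomial b (1 : R)) '' s)) := by
  classical
  intro p
  simp [mem_ideal_span_monomial_image, support_monomial]

end MonomialIdeal

section StandardMonomials
variable {σ K : Type*} [Field K] {I : Ideal (MvPolynomial σ K)}

theorem IsMonomialIdeal.linearIndependent_mk_monomial (hI : IsMonomialIdeal I) :
    LinearIndependent K fun m : {m : σ →₀ ℕ // monomial m 1 ∉ I} =>
      Ideal.Quotient.mk I (monomial (m : σ →₀ ℕ) (1 : K)) := by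
  classical
  rw [linearIndependent_iff']
  intro t g hg m hm
  have hmem : ∑ i ∈ t, monomial (i : σ →₀ ℕ) (g i) ∈ I := by
    rw [← Ideal.Quotient.eq_zero_iff_mem, ← hg, map_sum]
    refine Finset.sum_congr rfl fun i _ => ?_
    rw [← Ideal.Quotient.mkₐ_eq_mk K, ← map_smul, smul_monomial, smul_eq_mul, mul_one]
  have hcoeff : coeff m (∑ i ∈ t, monomial (i : σ →₀ ℕ) (g i)) = g m := by
    rw [coeff_sum, Finset.sum_eq_single m (fun i _ hi => ?_) (fun h => (h hm).elim)]
    · simp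
    · rw [coeff_monomial, if_neg (Subtype.coe_injective.ne hi)]
  by_contra hgm
  exact m.2 ((hI _).mp hmem m (by rwa [mem_support_iff, hcoeff]))

theorem IsMonomialIdeal.finite_setOf_monomial_notMem
    [FiniteDimensional K (MvPolynomial σ K ⧸ I)] (hI : IsMonomialIdeal I) :
    {m : σ →₀ ℕ | monomial m (1 : K) ∉ I}.Finite :=
  Set.finite_coe_iff.mp hI.linearIndependent_mk_monomial.finite

end StandardMonomials

section Scaling
variable {σ R : Type*} [CommSemiring R]

noncomputable def scaleVars (c : σ → Rˣ) : MvPolynomial σ R ≃ₐ[R] MvPolynomial σ R :=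
  AlgEquiv.ofAlgHom (aeval fun i => C (c i : R) * X i) (aeval fun i => C (↑(c i)⁻¹ : R) * X i)
    (by ext i : 1; rw [AlgHom.comp_apply, aeval_X, map_mul, aeval_X, aeval_C, algebraMap_eq,
      ← mul_assoc, ← map_mul, Units.inv_mul, map_one, one_mul, AlgHom.id_apply])
    (by ext i : 1; rw [AlgHom.comp_apply, aeval_X, map_mul, aeval_X, aeval_C, algebraMap_eq,
      ← mul_assoc, ← map_mul, Units.mul_inv, map_one, one_mul, AlgHom.id_apply])

theorem scaleVars_X (c : σ → Rˣ) (i : σ) : scaleVars c (X i) = C (c i : R) * X i :=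
  aeval_X _ _

theorem scaleVars_monomial (c : σ → Rˣ) (d : σ →₀ ℕ) (r : R) :
    scaleVars c (monomial d r) = monomial d ((d.prod fun i k => (c i : R) ^ k) * r) := by
  change aeval _ _ = _
  rw [aeval_monomial, monomial_eq, C_mul, mul_comm]
  simp only [mul_pow, Finsupp.prod_mul, ← map_pow]
  rw [← map_finsuppProd]
  simp only [algebraMap_eq]
  ring

theorem coeff_scaleVars (c : σ → Rˣ) (p : MvPolynomial σ R) (m : σ →₀ ℕ) :
    coeff m (scaleVars c p) = (m.prod fun i k => (c i : R) ^ k) * coeff m p := by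
  induction p using MvPolynomial.induction_on' with
  | monomial d r =>
    classical
    rw [scaleVars_monomial, coeff_monomial, coeff_monomial]
    split_ifs with h <;> simp [h]
  | add p q hp hq => simp [hp, hq, mul_add]

theorem support_scaleVars (c : σ → Rˣ) (p : MvPolynomial σ R) :
    (scaleVars c p).support = p.support := by
  ext m
  have hu : IsUnit (m.prod fun i k => (c i : R) ^ k) := by simp [Finsupp.prod, IsUnit.pow]
  simp [mem_support_iff, coeff_scaleVars, hu.mul_right_eq_zero]

theorem IsMonomialIdeal.scaleVars_mem_iff {I : Ideal (MvPolynomial σ R)} (hI : IsMonomialIdeal I)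
    (c : σ → Rˣ) (p : MvPolynomial σ R) : scaleVars c p ∈ I ↔ p ∈ I := by
  rw [hI, hI p, support_scaleVars]

theorem isHomogeneous_scaleVars_iff (c : σ → Rˣ) (p : MvPolynomial σ R) (j : ℕ) :
    (scaleVars c p).IsHomogeneous j ↔ p.IsHomogeneous j := by
  simp only [IsHomogeneous, IsWeightedHomogeneous, ← mem_support_iff, support_scaleVars]

end Scaling

section LinearForms
variable {σ R : Type*} [CommSemiring R] [Fintype σ]

variable (σ R) in
noncomputable def linearForms : (σ → R) →ₗ[R] homogeneousSubmodule σ R 1 :=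
  Fintype.linearCombination R fun i => ⟨X i, isHomogeneous_X R i⟩

theorem coe_linearForms (c : σ → R) :
    (linearForms σ R c : MvPolynomial σ R) = ∑ i, c i • X i := by
  simp [linearForms, Fintype.linearCombination_apply]

theorem linearForms_surjective : Function.Surjective (linearForms σ R) := by
  rintro ⟨L, hL⟩
  rw [homogeneousSubmodule_one_eq_span_X, Submodule.mem_span_range_iff_exists_fun] at hL
  obtain ⟨a, ha⟩ := hL
  exact ⟨a, Subtype.ext (by rw [coe_linearForms, ha])⟩

end LinearForms

section Graded
variable {K : Type*} [Field K] {n : ℕ} {I : Ideal (MvPolynomial (Fin n) K)}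

theorem mem_gradedPiece_iff {j : ℕ} {x : MvPolynomial (Fin n) K ⧸ I} :
    x ∈ gradedPiece K I j ↔
      ∃ p : MvPolynomial (Fin n) K, p.IsHomogeneous j ∧ Ideal.Quotient.mk I p = x :=
  Iff.rfl

theorem mk_mul_mem_gradedPiece {L : MvPolynomial (Fin n) K} (hL : L.IsHomogeneous 1) {j : ℕ}
    {x : MvPolynomial (Fin n) K ⧸ I} (hx : x ∈ gradedPiece K I j) :
    Ideal.Quotient.mk I L * x ∈ gradedPiece K I (j + 1) := by
  obtain ⟨p, hp, rfl⟩ := mem_gradedPiece_iff.mp hx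
  exact mem_gradedPiece_iff.mpr ⟨L * p, add_comm 1 j ▸ hL.mul hp, map_mul _ _ _⟩

variable (I) in
noncomputable def mulPiece (j : ℕ) :
    homogeneousSubmodule (Fin n) K 1 →ₗ[K] gradedPiece K I j →ₗ[K] gradedPiece K I (j + 1) :=
  LinearMap.mk₂ K (fun L x => ⟨Ideal.Quotient.mk I L * x, mk_mul_mem_gradedPiece L.2 x.2⟩)
    (fun _ _ _ => by ext; simp [add_mul])
    (fun _ _ _ => by
      ext
      simp [← smul_mul_assoc, ← Ideal.Quotient.mkₐ_eq_mk K, -Ideal.Quotient.mkₐ_eq_mk])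
    (fun _ _ _ => by ext; simp [mul_add])
    (fun _ _ _ => by ext; simp [mul_smul_comm])

@[simp]
theorem coe_mulPiece_apply (j : ℕ) (L : homogeneousSubmodule (Fin n) K 1)
    (x : gradedPiece K I j) :
    (mulPiece I j L x : MvPolynomial (Fin n) K ⧸ I) = Ideal.Quotient.mk I L * x :=
  rfl

theorem maxRank_iff_mulPiece {L : MvPolynomial (Fin n) K}
    (hL : L ∈ homogeneousSubmodule (Fin n) K 1) :
    maxRank K I L ↔ ∀ j, Function.Injective (mulPiece I j ⟨L, hL⟩) ∨
      Function.Surjective (mulPiece I j ⟨L, hL⟩) := by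
  refine forall_congr' fun j => or_congr ?_ ?_
  · rw [injective_iff_map_eq_zero]
    simp only [Subtype.forall, Subtype.ext_iff, coe_mulPiece_apply, Submodule.coe_zero]
  · refine ⟨fun h ⟨y, hy⟩ => ?_, fun h => le_antisymm ?_ fun y hy => ?_⟩
    · rw [← h] at hy
      obtain ⟨x, hx, rfl⟩ := hy
      exact ⟨⟨x, hx⟩, rfl⟩
    · rintro _ ⟨x, hx, rfl⟩
      exact mk_mul_mem_gradedPiece hL hx
    · obtain ⟨x, hx⟩ := h ⟨y, hy⟩
      exact ⟨x, x.2, congrArg Subtype.val hx⟩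

section Automorphism
variable (e : MvPolynomial (Fin n) K ≃ₐ[K] MvPolynomial (Fin n) K)
  (hhom : ∀ p j, (e p).IsHomogeneous j ↔ p.IsHomogeneous j)

theorem eq_map_of_forall_apply_mem_iff (he : ∀ p, e p ∈ I ↔ p ∈ I) :
    I = I.map (e : MvPolynomial (Fin n) K →+* MvPolynomial (Fin n) K) := by
  ext p
  rw [Ideal.map_coe, Ideal.mem_map_of_equiv]
  refine ⟨fun hp => ⟨e.symm p, (he _).mp ?_, e.apply_symm_apply p⟩, ?_⟩
  · rwa [e.apply_symm_apply]
  · rintro ⟨q, hq, rfl⟩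
    exact (he q).mpr hq

include hhom in
theorem quotientEquivAlg_mem_gradedPiece_iff
    (hI : I = I.map (e : MvPolynomial (Fin n) K →+* MvPolynomial (Fin n) K)) {j : ℕ}
    (x : MvPolynomial (Fin n) K ⧸ I) :
    Ideal.quotientEquivAlg I I e hI x ∈ gradedPiece K I j ↔ x ∈ gradedPiece K I j := by
  set ē := Ideal.quotientEquivAlg I I e hI
  simp only [mem_gradedPiece_iff]
  constructor
  · rintro ⟨q, hq, hqx⟩
    refine ⟨e.symm q, (hhom _ j).mp (by rwa [e.apply_symm_apply]), ē.injective ?_⟩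
    simpa [ē] using hqx
  · rintro ⟨q, hq, rfl⟩
    exact ⟨e q, (hhom q j).mpr hq, rfl⟩

include hhom in
theorem maxRank_algEquiv_apply_iff (he : ∀ p, e p ∈ I ↔ p ∈ I) {L : MvPolynomial (Fin n) K}
    (hL : L ∈ homogeneousSubmodule (Fin n) K 1) : maxRank K I (e L) ↔ maxRank K I L := by
  have hI := eq_map_of_forall_apply_mem_iff e he
  have heL : e L ∈ homogeneousSubmodule (Fin n) K 1 := (hhom L 1).mpr hL
  let ē (j : ℕ) : gradedPiece K I j ≃ₗ[K] gradedPiece K I j :=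
    (Ideal.quotientEquivAlg I I e hI).toLinearEquiv.ofSubmodules _ _ <| by
      ext x
      rw [Submodule.mem_map_equiv, ← quotientEquivAlg_mem_gradedPiece_iff e hhom hI]
      exact iff_of_eq (congrArg (· ∈ gradedPiece K I j)
        ((Ideal.quotientEquivAlg I I e hI).toLinearEquiv.apply_symm_apply x))
  have hconj (j : ℕ) : mulPiece I j ⟨e L, heL⟩ ∘ ē j = ē (j + 1) ∘ mulPiece I j ⟨L, hL⟩ := by
    ext x
    simp [ē]
  rw [maxRank_iff_mulPiece heL, maxRank_iff_mulPiece hL]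
  refine forall_congr' fun j => ?_
  rw [← EquivLike.injective_comp (ē j), ← EquivLike.surjective_comp (ē j), hconj,
    EquivLike.comp_injective, EquivLike.comp_surjective]

end Automorphism

variable [FiniteDimensional K (MvPolynomial (Fin n) K ⧸ I)]

theorem IsMonomialIdeal.exists_gradedPiece_eq_bot (hI : IsMonomialIdeal I) :
    ∃ N, ∀ j, N ≤ j → gradedPiece K I j = ⊥ := by
  obtain ⟨B, hB⟩ := (hI.finite_setOf_monomial_notMem.image Finsupp.degree).bddAbove
  refine ⟨B + 1, fun j hj => eq_bot_iff.mpr ?_⟩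
  rintro _ ⟨p, hp, rfl⟩
  rw [Submodule.mem_bot, AlgHom.toLinearMap_apply, Ideal.Quotient.mkₐ_eq_mk,
    Ideal.Quotient.eq_zero_iff_mem]
  refine (hI p).mpr fun m hm => ?_
  by_contra hm'
  have hdeg : m.degree = j := by
    rw [Finsupp.degree_eq_weight_one]
    exact hp (mem_support_iff.mp hm)
  have := hB ⟨m, hm', rfl⟩
  omega

theorem IsMonomialIdeal.exists_units_maxRank [Infinite K] (hI : IsMonomialIdeal I)
    {L : MvPolynomial (Fin n) K} (hL : L ∈ homogeneousSubmodule (Fin n) K 1)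
    (hmax : maxRank K I L) : ∃ c : Fin n → Kˣ, maxRank K I (∑ i, (c i : K) • X i) := by
  obtain ⟨N, hN⟩ := hI.exists_gradedPiece_eq_bot
  obtain ⟨a, ha⟩ := linearForms_surjective (⟨L, hL⟩ : homogeneousSubmodule (Fin n) K 1)
  rw [maxRank_iff_mulPiece hL, ← ha] at hmax
  choose p hpa hp using fun j => exists_injective_or_surjective_of_eval_ne_zero
    ((mulPiece I j).comp (linearForms _ K)) (hmax j)
  obtain ⟨c, hc⟩ := exists_units_forall_eval_ne_zero (Finset.range N) p
    fun j _ hj => hpa j (by rw [hj, map_zero])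
  refine ⟨c, ?_⟩
  rw [← coe_linearForms, maxRank_iff_mulPiece (linearForms _ K _).2]
  intro j
  rcases lt_or_ge j N with hj | hj
  · exact hp j _ (hc j (Finset.mem_range.mpr hj))
  · have : Subsingleton (gradedPiece K I j) := by
      rw [hN j hj]
      infer_instance
    exact .inl (Function.injective_of_subsingleton _)

end Graded

/-- For an Artinian monomial ideal `I ⊂ S = k[x_1,…,x_n]` over an infinite field,
`A = S/I` has the weak Lefschetz property (some linear form has maximal rank in every
degree) if and only if `ℓ = x_1 + ⋯ + x_n` is a Lefschetz element for `A`. -/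
theorem stmt17 (K : Type*) [Field K] [Infinite K] (n : ℕ)
    (I : Ideal (MvPolynomial (Fin n) K))
    (hmono : ∃ s : Set (Fin n →₀ ℕ),
      I = Ideal.span ((fun b => MvPolynomial.monomial b (1 : K)) '' s))
    (hart : FiniteDimensional K (MvPolynomial (Fin n) K ⧸ I)) :
    (∃ L ∈ MvPolynomial.homogeneousSubmodule (Fin n) K 1, maxRank K I L) ↔
      maxRank K I (∑ i : Fin n, X i) := by
  obtain ⟨s, rfl⟩ := hmono
  have hI : IsMonomialIdeal _ := isMonomialIdeal_span_monomial (R := K) s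
  have hℓ : ∑ i : Fin n, X i ∈ homogeneousSubmodule (Fin n) K 1 :=
    IsHomogeneous.sum _ _ _ fun i _ => isHomogeneous_X K i
  refine ⟨fun ⟨L, hL, hmax⟩ => ?_, fun h => ⟨_, hℓ, h⟩⟩
  obtain ⟨c, hc⟩ := hI.exists_units_maxRank hL hmax
  have hscale : scaleVars c (∑ i, X i) = ∑ i, (c i : K) • X i := by
    simp [scaleVars_X, smul_eq_C_mul]
  rwa [← hscale, maxRank_algEquiv_apply_iff _ (isHomogeneous_scaleVars_iff c)
    (hI.scaleVars_mem_iff c) hℓ] at hc
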